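/- arXiv:1906.00747 — 3 statements merged into one kernel-verified Lean document; each statement's English description precedes it below -/
import Mathlib

section
/- Fix n ∈ ℕ and ε > 0. Suppose x ∈ ℝ^d, f₁,…,fₙ : ℝ^d → ℝ, and (p,q) ∈ ℤ × ℤⁿ with q ≠ 0 satisfies |p + q₁f₁(x) + … + qₙfₙ(x)| < Π₊(q)^{-1-ε}. Let r = Π₊(q)^{-ε/(n+1)}, and for each i let tᵢ ∈ ℤ_{≥0} be minimal with e^{-tᵢ} max{1,|qᵢ|} ≤ r, and t = t₁+…+tₙ. Then e^t |p + q₁f₁(x) + … + qₙfₙ(x)| < eⁿ r and e^{-tᵢ}|qᵢ| ≤ r for all i; consequently the lattice g_t u_{f(x)} ℤ^{n+1} contains a nonzero vector of supremum norm at most eⁿ r, i.e. δ(g_t u_{f(x)} ℤ^{n+1}) < eⁿ r. -/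
open scoped BigOperators

/-- `Π₊(q)`: product of `|qᵢ|` over the nonzero coordinates (empty product = 1). -/
noncomputable def PiPlus {n : ℕ} (q : Fin n → ℤ) : ℝ :=
  ∏ i, if q i = 0 then (1 : ℝ) else |(q i : ℝ)|

/-!
Since `tᵢ` is minimal and `r ≤ 1`, `e^{tᵢ} r ≤ e · max{1,|qᵢ|}`; multiplying over `i` gives
`e^t rⁿ ≤ eⁿ Π₊(q)`. Together with `Π₊(q) · Π₊(q)^{-1-ε} = Π₊(q)^{-ε} = r^{n+1}` this turns the
approximation `|p + q·f(x)| < Π₊(q)^{-1-ε}` into `e^t |p + q·f(x)| · rⁿ < eⁿ r · rⁿ`.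
The remaining coordinates `e^{-tᵢ} qᵢ` are at most `r` by the choice of `tᵢ`.
-/

open Real

lemma max_one_abs_intCast_eq (z : ℤ) :
    max 1 |(z : ℝ)| = if z = 0 then 1 else |(z : ℝ)| := by
  split_ifs with hz
  · simp [hz]
  · exact max_eq_right (mod_cast Int.one_le_abs hz)

lemma piPlus_eq_prod_max_one_abs {n : ℕ} (q : Fin n → ℤ) :
    PiPlus q = ∏ i, max 1 |(q i : ℝ)| := by
  simp only [PiPlus, max_one_abs_intCast_eq]

lemma one_le_piPlus {n : ℕ} (q : Fin n → ℤ) : 1 ≤ PiPlus q := by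
  rw [piPlus_eq_prod_max_one_abs]
  exact Finset.one_le_prod fun i _ => le_max_left _ _

lemma exp_mul_le_exp_one_mul_of_minimal {a r : ℝ} {t : ℕ} (hra : r ≤ exp 1 * a)
    (hmin : ∀ s : ℕ, s < t → ¬ exp (-(s : ℝ)) * a ≤ r) :
    exp t * r ≤ exp 1 * a := by
  obtain _ | s := t
  · simpa using hra
  have hs : exp s * r < a := by
    have h := mul_lt_mul_of_pos_left (not_le.mp (hmin s s.lt_succ_self)) (exp_pos s)
    rwa [← mul_assoc, ← exp_add, add_neg_cancel, exp_zero, one_mul] at h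
  calc exp ((s + 1 : ℕ) : ℝ) * r = exp 1 * (exp s * r) := by
        rw [Nat.cast_succ, add_comm, exp_add, mul_assoc]
    _ ≤ exp 1 * a := by gcongr

lemma exp_sum_mul_pow_le {n : ℕ} {t : Fin n → ℕ} {a : Fin n → ℝ} {r : ℝ} (hr : 0 ≤ r)
    (h : ∀ i, exp (t i) * r ≤ exp 1 * a i) :
    exp ((∑ i, t i : ℕ) : ℝ) * r ^ n ≤ exp n * ∏ i, a i := by
  have hprod := Finset.prod_le_prod (s := Finset.univ) (fun i _ => by positivity) fun i _ => h i
  simpa [Finset.prod_mul_distrib, ← exp_sum, ← exp_nat_mul] using hprod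

lemma mul_rpow_neg_one_add_eq_pow {P ε : ℝ} (hP : 0 < P) (n : ℕ) :
    P * P ^ (-(1 + ε)) = (P ^ (-(ε / ((n : ℝ) + 1)))) ^ (n + 1) := by
  rw [← rpow_natCast, ← rpow_mul hP.le]
  nth_rw 1 [← rpow_one P]
  rw [← rpow_add hP]
  congr 1
  push_cast
  field_simp
  ring

lemma exp_mul_lt_of_lt_rpow {n : ℕ} {P ε E L r : ℝ} (hP : 0 < P)
    (hr : r = P ^ (-(ε / ((n : ℝ) + 1)))) (hE : 0 < E) (hEr : E * r ^ n ≤ exp n * P)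
    (hL : L < P ^ (-(1 + ε))) :
    E * L < exp n * r := by
  have hrn : 0 < r ^ n := pow_pos (hr ▸ rpow_pos_of_pos hP _) n
  refine lt_of_mul_lt_mul_right ?_ hrn.le
  calc E * L * r ^ n < E * r ^ n * P ^ (-(1 + ε)) := by
        rw [mul_right_comm]; gcongr
    _ ≤ exp n * P * P ^ (-(1 + ε)) := by gcongr
    _ = exp n * r * r ^ n := by
        rw [mul_assoc, mul_rpow_neg_one_add_eq_pow hP n, ← hr, pow_succ']; ring

theorem lattice_short_vector_general (n : ℕ) (ε : ℝ) (hε : 0 < ε)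
    (f : Fin n → ℝ) -- fᵢ(x) for the given x
    (p : ℤ) (q : Fin n → ℤ) (hq : q ≠ 0)
    (happrox : |(p : ℝ) + ∑ i, (q i : ℝ) * f i| < (PiPlus q) ^ (-(1 + ε)))
    (r : ℝ) (hr : r = (PiPlus q) ^ (-(ε / ((n : ℝ) + 1))))
    (t : Fin n → ℕ)
    (ht : ∀ i, Real.exp (-(t i : ℝ)) * max 1 |(q i : ℝ)| ≤ r)
    (htmin : ∀ i, ∀ s : ℕ, s < t i → ¬ (Real.exp (-(s : ℝ)) * max 1 |(q i : ℝ)| ≤ r)) :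
    (Real.exp ((∑ i, t i : ℕ) : ℝ) * |(p : ℝ) + ∑ i, (q i : ℝ) * f i|
        < Real.exp (n : ℝ) * r) ∧
    (∀ i, Real.exp (-(t i : ℝ)) * |(q i : ℝ)| ≤ r) ∧
    (∃ v : Fin (n + 1) → ℝ,
      v = Fin.cons (Real.exp ((∑ i, t i : ℕ) : ℝ) * ((p : ℝ) + ∑ i, (q i : ℝ) * f i))
            (fun i => Real.exp (-(t i : ℝ)) * (q i : ℝ)) ∧
      v ≠ 0 ∧ ∀ j, |v j| < Real.exp (n : ℝ) * r) := by
  have hP : 1 ≤ PiPlus q := one_le_piPlus q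
  have hr1 : r ≤ 1 := hr ▸ rpow_le_one_of_one_le_of_nonpos hP (by
    have : 0 < ε / ((n : ℝ) + 1) := by positivity
    linarith)
  have hr0 : 0 < r := hr ▸ rpow_pos_of_pos (by linarith) _
  have hT := exp_sum_mul_pow_le hr0.le fun i => exp_mul_le_exp_one_mul_of_minimal
    (hr1.trans (one_le_mul_of_one_le_of_one_le (one_le_exp zero_le_one) (le_max_left _ _)))
    (htmin i)
  rw [← piPlus_eq_prod_max_one_abs] at hT
  have hfirst := exp_mul_lt_of_lt_rpow (by linarith) hr (exp_pos _) hT happrox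
  have hrest : ∀ i, exp (-(t i : ℝ)) * |(q i : ℝ)| ≤ r := fun i =>
    (mul_le_mul_of_nonneg_left (le_max_right _ _) (exp_pos _).le).trans (ht i)
  obtain ⟨i, hi⟩ := Function.ne_iff.mp hq
  have hexp_n : 1 < exp n := one_lt_exp_iff.mpr (Nat.cast_pos.mpr (Fin.pos i))
  refine ⟨hfirst, hrest, _, rfl, fun h => hi ?_, Fin.cases ?_ fun j => ?_⟩
  · simpa [exp_ne_zero] using congrFun h i.succ
  · simpa [abs_mul] using hfirst
  · simpa [abs_mul] using (hrest j).trans_lt (lt_mul_of_one_lt_left hr0 hexp_n)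

/-- If `|p + ∑ qᵢ fᵢ(x)| < Π₊(q)^{-1-ε}`, `r = Π₊(q)^{-ε/(n+1)}` and `tᵢ` is
minimal with `e^{-tᵢ} max{1,|qᵢ|} ≤ r`, `t = ∑ tᵢ`, then
`e^t |p + ∑ qᵢ fᵢ(x)| < eⁿ r`, `e^{-tᵢ}|qᵢ| ≤ r` for all `i`, and consequently
the lattice `g_t u_{f(x)} ℤ^{n+1}` contains a nonzero vector of sup norm
`< eⁿ r`, i.e. `δ(g_t u_{f(x)} ℤ^{n+1}) < eⁿ r`. -/
theorem lattice_short_vector (n : ℕ) (ε : ℝ) (hε : 0 < ε)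
    (x : Fin n → ℝ) -- plays no role beyond evaluating the fᵢ; kept for faithfulness
    (f : Fin n → ℝ) -- fᵢ(x) for the given x
    (p : ℤ) (q : Fin n → ℤ) (hq : q ≠ 0)
    (happrox : |(p : ℝ) + ∑ i, (q i : ℝ) * f i| < (PiPlus q) ^ (-(1 + ε)))
    (r : ℝ) (hr : r = (PiPlus q) ^ (-(ε / ((n : ℝ) + 1))))
    (t : Fin n → ℕ)
    (ht : ∀ i, Real.exp (-(t i : ℝ)) * max 1 |(q i : ℝ)| ≤ r)
    (htmin : ∀ i, ∀ s : ℕ, s < t i → ¬ (Real.exp (-(s : ℝ)) * max 1 |(q i : ℝ)| ≤ r)) :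
    (Real.exp ((∑ i, t i : ℕ) : ℝ) * |(p : ℝ) + ∑ i, (q i : ℝ) * f i|
        < Real.exp (n : ℝ) * r) ∧
    (∀ i, Real.exp (-(t i : ℝ)) * |(q i : ℝ)| ≤ r) ∧
    (∃ v : Fin (n + 1) → ℝ,
      v = Fin.cons (Real.exp ((∑ i, t i : ℕ) : ℝ) * ((p : ℝ) + ∑ i, (q i : ℝ) * f i))
            (fun i => Real.exp (-(t i : ℝ)) * (q i : ℝ)) ∧
      v ≠ 0 ∧ ∀ j, |v j| < Real.exp (n : ℝ) * r) :=
  lattice_short_vector_general n ε hε f p q hq happrox r hr t ht htmin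
end

section
/- Let Ψ : ℤⁿ → ℝ₊ satisfy the monotonicity condition Ψ(q₁,…,qᵢ,…,qₙ) ≤ Ψ(q₁,…,q'ᵢ,…,qₙ) whenever |qᵢ| ≥ |q'ᵢ| and qᵢq'ᵢ > 0, and suppose ∑_{q∈ℤⁿ, q≠0} Ψ(q) < ∞. Then Ψ(q) ≤ Π₊(q)^{-1} for all q ∈ ℤⁿ with ‖q‖ sufficiently large. -/
open scoped BigOperators

lemma sign_mul_abs_facts (a : ℤ) (ha : a ≠ 0) (k : ℤ) (hk : 1 ≤ k) :
    |a.sign * k| = k ∧ 0 < a * (a.sign * k) := by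
  rcases ha.lt_or_gt with h | h
  · rw [Int.sign_eq_neg_one_of_neg h]
    exact ⟨by rw [abs_mul]; simp [abs_of_pos (by omega : (0:ℤ) < k)], by nlinarith⟩
  · rw [Int.sign_eq_one_of_pos h]
    exact ⟨by rw [abs_mul]; simp [abs_of_pos (by omega : (0:ℤ) < k)], by nlinarith⟩

lemma mono_aux {n : ℕ} (Ψ : (Fin n → ℤ) → ℝ)
    (hmono : ∀ (q : Fin n → ℤ) (i : Fin n) (q' : ℤ),
      |q'| ≤ |q i| → 0 < q i * q' → Ψ q ≤ Ψ (Function.update q i q'))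
    (s : Finset (Fin n)) :
    ∀ q q' : Fin n → ℤ, (∀ i, i ∉ s → q' i = q i) →
      (∀ i, q' i = q i ∨ (|q' i| ≤ |q i| ∧ 0 < q i * q' i)) → Ψ q ≤ Ψ q' := by
  induction s using Finset.induction with
  | empty =>
    intro q q' hout _
    have : q' = q := funext fun i => hout i (Finset.notMem_empty i)
    simp [this]
  | @insert a t ha ih =>
    intro q q' hout hcond
    set q'' := Function.update q' a (q a) with hq''
    have h1 : Ψ q ≤ Ψ q'' := by
      apply ih q q''
      · intro i hi
        by_cases h : i = a
        · subst h; simp [hq'']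
        · rw [hq'', Function.update_of_ne h]
          exact hout i (by simp [h, hi])
      · intro i
        by_cases h : i = a
        · subst h; left; simp [hq'']
        · rw [hq'', Function.update_of_ne h]; exact hcond i
    have h2 : Ψ q'' ≤ Ψ q' := by
      rcases hcond a with heq | ⟨hle, hp⟩
      · have : q'' = q' := by rw [hq'', ← heq, Function.update_eq_self]
        simp [this]
      · have key := hmono q'' a (q' a)
          (by rw [hq'', Function.update_self]; exact hle)
          (by rw [hq'', Function.update_self]; exact hp)
        rwa [hq'', Function.update_idem, Function.update_eq_self] at key
    exact h1.trans h2


/-- If `Ψ : ℤⁿ → ℝ₊` is coordinatewise non-increasing (in the sense of (1.7) of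
Bernik–Kleinbock–Margulis) and `∑_{q ≠ 0} Ψ(q) < ∞`, then `Ψ(q) ≤ Π₊(q)⁻¹` for
all `q` with `‖q‖` sufficiently large. -/
theorem psi_le_piPlus_inv (n : ℕ) (Ψ : (Fin n → ℤ) → ℝ)
    (hpos : ∀ q, 0 < Ψ q)
    (hmono : ∀ (q : Fin n → ℤ) (i : Fin n) (q' : ℤ),
      |q'| ≤ |q i| → 0 < q i * q' → Ψ q ≤ Ψ (Function.update q i q'))
    (hsum : Summable (fun q : {q : Fin n → ℤ // q ≠ 0} => Ψ q)) :
    ∃ H : ℕ, ∀ q : Fin n → ℤ,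
      H ≤ (Finset.univ.sup fun i => (q i).natAbs) → Ψ q ≤ (PiPlus q)⁻¹ := by
  -- tail vanishing: a finite set F outside of which all finite sums are < 1/2
  obtain ⟨F, hF⟩ := summable_iff_vanishing.mp hsum (Metric.ball 0 (1/2))
    (Metric.ball_mem_nhds 0 (by norm_num))
  set M : ℕ := F.sup (fun p => Finset.univ.sup fun i => ((p : Fin n → ℤ) i).natAbs) with hM
  refine ⟨2 * M + 2, fun q hq => ?_⟩
  set m : ℕ := Finset.univ.sup fun i => (q i).natAbs with hm
  have hm2 : 2 * M + 2 ≤ m := hq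
  -- get the coordinate achieving the max
  have hne : (Finset.univ : Finset (Fin n)).Nonempty := by
    by_contra h
    rw [Finset.not_nonempty_iff_eq_empty] at h
    rw [hm, h] at hm2; simp at hm2
  obtain ⟨i₀, -, hi₀⟩ := Finset.exists_mem_eq_sup Finset.univ hne
    (fun i => (q i).natAbs)
  have hqi₀ : (q i₀).natAbs = m := hi₀.symm
  have hqi₀ne : q i₀ ≠ 0 := by
    intro h; rw [h] at hqi₀; simp at hqi₀; omega
  -- the box
  set A : Fin n → Finset ℤ := fun i =>
    if i = i₀ then (Finset.Ioc (m/2) m).image (fun k : ℕ => (q i₀).sign * (k:ℤ))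
    else if q i = 0 then {0}
    else (Finset.Icc 1 (q i).natAbs).image (fun k : ℕ => (q i).sign * (k:ℤ)) with hA
  set box : Finset (Fin n → ℤ) := Fintype.piFinset A with hbox
  -- membership facts
  have hmem : ∀ q' ∈ box, ∀ i,
      (q' i = q i ∨ (|q' i| ≤ |q i| ∧ 0 < q i * q' i)) ∧
      (i = i₀ → (m/2) < (q' i).natAbs) := by
    intro q' hq' i
    have hi := Fintype.mem_piFinset.mp hq' i
    simp only [hA] at hi
    by_cases h : i = i₀
    · subst h
      rw [if_pos rfl] at hi
      obtain ⟨k, hk, hkq⟩ := Finset.mem_image.mp hi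
      rw [Finset.mem_Ioc] at hk
      have hk1 : 1 ≤ (k:ℤ) := by exact_mod_cast Nat.one_le_iff_ne_zero.mpr (by omega)
      obtain ⟨habs, hposk⟩ := sign_mul_abs_facts (q i) hqi₀ne (k:ℤ) hk1
      constructor
      · right
        refine ⟨?_, by rw [← hkq]; exact hposk⟩
        rw [← hkq, habs, Int.abs_eq_natAbs, hqi₀]
        exact_mod_cast hk.2
      · intro _
        have h3 : ((((q i).sign * (k:ℤ)).natAbs : ℤ)) = (k:ℤ) := by
          rw [← Int.abs_eq_natAbs]; exact habs
        have : (q' i).natAbs = k := by rw [← hkq]; exact_mod_cast h3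
        omega
    · simp only [if_neg h] at hi
      by_cases h0 : q i = 0
      · rw [if_pos h0, Finset.mem_singleton] at hi
        exact ⟨Or.inl (by rw [hi, h0]), fun hc => absurd hc h⟩
      · rw [if_neg h0, Finset.mem_image] at hi
        obtain ⟨k, hk, hkq⟩ := hi
        rw [Finset.mem_Icc] at hk
        have hk1 : 1 ≤ (k:ℤ) := by exact_mod_cast hk.1
        obtain ⟨habs, hposk⟩ := sign_mul_abs_facts (q i) h0 (k:ℤ) hk1
        refine ⟨Or.inr ⟨?_, by rw [← hkq]; exact hposk⟩, fun hc => absurd hc h⟩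
        rw [← hkq, habs, Int.abs_eq_natAbs]
        exact_mod_cast hk.2
  -- every box element is nonzero
  have hbox_ne : ∀ q' ∈ box, q' ≠ 0 := by
    intro q' hq' hc
    have := (hmem q' hq' i₀).2 rfl
    rw [hc] at this; simp at this
  -- every box element is outside F
  have hbox_F : ∀ q' (hq' : q' ∈ box), (⟨q', hbox_ne q' hq'⟩ : {q : Fin n → ℤ // q ≠ 0}) ∉ F := by
    intro q' hq' hc
    have h1 : (m/2) < (q' i₀).natAbs := (hmem q' hq' i₀).2 rfl
    have h2 : (q' i₀).natAbs ≤ M := by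
      rw [hM]
      calc (q' i₀).natAbs ≤ Finset.univ.sup fun i => (q' i).natAbs :=
            Finset.le_sup (f := fun i => (q' i).natAbs) (Finset.mem_univ i₀)
        _ = (fun p : {q : Fin n → ℤ // q ≠ 0} =>
              Finset.univ.sup fun i => (p.1 i).natAbs) ⟨q', hbox_ne q' hq'⟩ := rfl
        _ ≤ F.sup (fun p : {q : Fin n → ℤ // q ≠ 0} =>
              Finset.univ.sup fun i => (p.1 i).natAbs) :=
            Finset.le_sup (f := fun p : {q : Fin n → ℤ // q ≠ 0} =>
              Finset.univ.sup fun i => (p.1 i).natAbs) hc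
    omega
  -- Ψ q ≤ Ψ q' on the box
  have hΨbox : ∀ q' ∈ box, Ψ q ≤ Ψ q' := by
    intro q' hq'
    exact mono_aux Ψ hmono Finset.univ q q' (fun i hi => absurd (Finset.mem_univ i) hi)
      (fun i => (hmem q' hq' i).1)
  -- sum bound
  have hcard_sum : (box.card : ℝ) * Ψ q ≤ ∑ q' ∈ box, Ψ q' := by
    have := Finset.card_nsmul_le_sum box Ψ (Ψ q) hΨbox
    rwa [nsmul_eq_mul] at this
  -- map box into the subtype
  set t : Finset {q : Fin n → ℤ // q ≠ 0} :=
    box.attach.map ⟨fun x => ⟨x.1, hbox_ne x.1 x.2⟩,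
      fun x y hxy => Subtype.ext (by simpa using congrArg Subtype.val hxy)⟩ with ht
  have hsum_t : ∑ x ∈ t, Ψ x = ∑ q' ∈ box, Ψ q' := by
    rw [ht, Finset.sum_map]
    exact Finset.sum_attach box Ψ
  have hdisj : Disjoint t F := by
    rw [Finset.disjoint_left]
    intro x hx
    rw [ht, Finset.mem_map] at hx
    obtain ⟨y, hy, hyx⟩ := hx
    rw [← hyx]
    exact hbox_F y.1 y.2
  have htail : ∑ q' ∈ box, Ψ q' < 1/2 := by
    have := hF t hdisj
    rw [Metric.mem_ball, Real.dist_0_eq_abs] at this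
    rw [← hsum_t]
    calc ∑ x ∈ t, Ψ x ≤ |∑ x ∈ t, Ψ x| := le_abs_self _
      _ < 1/2 := this
  -- cardinality computations
  have hinj : ∀ a : ℤ, a ≠ 0 → Function.Injective (fun k : ℕ => a.sign * (k:ℤ)) := by
    intro a ha k l hkl
    have hs : a.sign ≠ 0 := fun h => ha (Int.sign_eq_zero_iff_zero.mp h)
    exact_mod_cast mul_left_cancel₀ hs hkl
  have hcardA : ∀ i, (A i).card =
      if i = i₀ then m - m/2 else if q i = 0 then 1 else (q i).natAbs := by
    intro i
    simp only [hA]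
    by_cases h : i = i₀
    · rw [if_pos h, if_pos h, Finset.card_image_of_injective _ (hinj _ hqi₀ne),
        Nat.card_Ioc]
    · rw [if_neg h, if_neg h]
      by_cases h0 : q i = 0
      · rw [if_pos h0, if_pos h0, Finset.card_singleton]
      · rw [if_neg h0, if_neg h0, Finset.card_image_of_injective _ (hinj _ h0),
          Nat.card_Icc]
        omega
  set g : Fin n → ℕ := fun i => if q i = 0 then 1 else (q i).natAbs with hg
  have hPiPlus : PiPlus q = ((∏ i, g i : ℕ) : ℝ) := by
    rw [PiPlus, Nat.cast_prod]
    apply Finset.prod_congr rfl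
    intro i _
    by_cases h0 : q i = 0
    · simp [hg, h0]
    · simp [hg, h0, Nat.cast_natAbs]
  have hprod_erase_eq : ∏ i ∈ Finset.univ.erase i₀, (A i).card
      = ∏ i ∈ Finset.univ.erase i₀, g i := by
    apply Finset.prod_congr rfl
    intro i hi
    have hne' : i ≠ i₀ := (Finset.mem_erase.mp hi).1
    rw [hcardA i, if_neg hne', hg]
  have hboxcard : box.card = (m - m/2) * ∏ i ∈ Finset.univ.erase i₀, g i := by
    rw [hbox, Fintype.card_piFinset, ← Finset.mul_prod_erase Finset.univ _
      (Finset.mem_univ i₀), hcardA i₀, if_pos rfl, hprod_erase_eq]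
  have hgprod : ∏ i, g i = m * ∏ i ∈ Finset.univ.erase i₀, g i := by
    rw [← Finset.mul_prod_erase Finset.univ g (Finset.mem_univ i₀), hg]
    simp only [if_neg hqi₀ne, hqi₀]
  have hcard_le : ∏ i, g i ≤ 2 * box.card := by
    rw [hboxcard, hgprod, ← mul_assoc]
    exact Nat.mul_le_mul_right _ (by omega)
  -- put things together
  have hPpos : 0 < PiPlus q := by
    rw [hPiPlus]
    have : 0 < ∏ i, g i := by
      apply Finset.prod_pos
      intro i _
      rw [hg]
      by_cases h0 : q i = 0
      · simp [h0]
      · simp only [if_neg h0]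
        omega
    exact_mod_cast this
  have hfinal : Ψ q * PiPlus q ≤ 1 := by
    have h1 : Ψ q * PiPlus q ≤ Ψ q * (2 * box.card) := by
      apply mul_le_mul_of_nonneg_left _ (hpos q).le
      rw [hPiPlus]
      exact_mod_cast hcard_le
    have h2 : Ψ q * (2 * (box.card : ℝ)) = 2 * ((box.card : ℝ) * Ψ q) := by ring
    calc Ψ q * PiPlus q ≤ Ψ q * (2 * box.card) := h1
      _ = 2 * ((box.card : ℝ) * Ψ q) := h2
      _ ≤ 2 * (∑ q' ∈ box, Ψ q') := by linarith [hcard_sum]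
      _ ≤ 2 * (1/2) := by linarith [htail]
      _ = 1 := by norm_num
  have := (le_div_iff₀ hPpos).mpr hfinal
  simpa [one_div] using this
end

section
/- Let ψ : ℝ₊ → ℝ₊ be monotonic (non-increasing) with ∑_{h=1}^∞ (log h)^{n-1} ψ(h) < ∞. Then ∑_{q∈ℤⁿ, q≠0} ψ(Π₊(q)) < ∞, where Π₊(q) = ∏_{i: qᵢ≠0} |qᵢ|. -/
open scoped BigOperators

/-!
Write `Π₊(q) = ∏ᵢ (aᵢ + 1)` with `aᵢ = |qᵢ| - 1`; every `a ∈ ℕⁿ` arises from at most `3ⁿ`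
vectors `q`, so it suffices to bound `Tₙ = ∑_{a ∈ ℕⁿ} ψ(P(a))`, where `P(a) = ∏ᵢ (aᵢ + 1)`.
For `P ≥ 1`, comparing `ψ((t + 1)P)` with the `P` values `ψ(tP + r + 1)`, `r < P`, gives
`∑_{t ≥ 1} ψ(tP) ≤ ψ(P) + P⁻¹ ∑_{m ≥ P} ψ(m + 1)`. Peeling off one coordinate this way and
exchanging the sums,
`T_{k+1} ≤ T_k + ∑_m ψ(m + 1) ∑_{P(a) ≤ m} P(a)⁻¹ ≤ T_k + ∑_m H_mᵏ ψ(m + 1)`,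
where `H_m ≤ 1 + log m` is the harmonic number. Hence `Tₙ ≤ (n + 1) ∑_m (1 + H_m)ⁿ⁻¹ ψ(m + 1)`,
which is finite by hypothesis. All sums are taken in `ℝ≥0∞`, where they can be exchanged freely.
-/

open scoped ENNReal
open Finset Fintype Filter

theorem harmonic_nonneg (m : ℕ) : 0 ≤ harmonic m := by
  rw [harmonic]
  positivity

theorem ENNReal.ofReal_harmonic (m : ℕ) :
    ENNReal.ofReal (harmonic m) = ∑ j ∈ range m, ((j : ℝ≥0∞) + 1)⁻¹ := by
  rw [harmonic, Rat.cast_sum, ENNReal.ofReal_sum_of_nonneg (fun j _ => by positivity)]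
  refine sum_congr rfl fun j _ => ?_
  rw [Rat.cast_inv, Rat.cast_natCast, ENNReal.ofReal_inv_of_pos (by positivity),
    ENNReal.ofReal_natCast]
  push_cast
  rfl

theorem ENNReal.tsum_inv_prod_add_one_le_harmonic_pow (k m : ℕ) :
    ∑' a : Fin k → ℕ, (if ∏ i, (a i + 1) ≤ m then ((∏ i, (a i + 1) : ℕ) : ℝ≥0∞)⁻¹ else 0)
      ≤ ENNReal.ofReal (harmonic m) ^ k :=
  calc _ ≤ ∑' a : Fin k → ℕ,
        if a ∈ piFinset fun _ => range m then ∏ i, ((a i : ℝ≥0∞) + 1)⁻¹ else 0 := by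
        refine ENNReal.tsum_le_tsum fun a => ?_
        split_ifs with hle hmem
        · push_cast
          rw [ENNReal.prod_inv_distrib (fun _ _ _ _ _ => Or.inr (by simp))]
        · refine absurd (mem_piFinset.2 fun i => mem_range.2 ?_) hmem
          have := single_le_prod' (f := fun i => a i + 1) (fun i _ => by omega) (mem_univ i)
          omega
        · exact zero_le
        · exact le_rfl
    _ = ∑ a ∈ piFinset fun _ => range m, ∏ i, ((a i : ℝ≥0∞) + 1)⁻¹ := by
        rw [tsum_eq_sum (s := piFinset fun _ => range m) (fun a ha => if_neg ha)]
        exact sum_congr rfl fun a ha => if_pos ha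
    _ = _ := by
        rw [sum_prod_piFinset (range m) fun _ j => ((j : ℝ≥0∞) + 1)⁻¹, prod_const, card_univ,
          Fintype.card_fin, ENNReal.ofReal_harmonic]

theorem ENNReal.tsum_comp_natAbs_sub_one_le (n : ℕ) (G : (Fin n → ℕ) → ℝ≥0∞) :
    ∑' q : Fin n → ℤ, G (fun i => (q i).natAbs - 1) ≤ 3 ^ n * ∑' a, G a := by
  have hinj : Function.Injective (fun t : ℤ => (t.natAbs - 1, SignType.sign t)) := by
    intro s t h
    simp only [Prod.mk.injEq] at h
    obtain ⟨h1, h2⟩ := h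
    rcases lt_trichotomy s 0 with hs | hs | hs <;> rcases lt_trichotomy t 0 with ht | ht | ht <;>
      simp_all <;> omega
  let F : (Fin n → ℕ × SignType) → ℝ≥0∞ := fun p => G (fun i => (p i).1)
  calc ∑' q : Fin n → ℤ, G (fun i => (q i).natAbs - 1)
      = ∑' q : Fin n → ℤ, F (fun i => ((q i).natAbs - 1, SignType.sign (q i))) := rfl
    _ ≤ ∑' p, F p := ENNReal.tsum_comp_le_tsum_of_injective hinj.comp_left F
    _ = ∑' (a : Fin n → ℕ) (_ : Fin n → SignType), G a := by
      rw [← (Equiv.arrowProdEquivProdArrow _ _ _).symm.tsum_eq, ENNReal.tsum_prod']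
      rfl
    _ = 3 ^ n * ∑' a, G a := by
      simp [ENNReal.tsum_mul_left, show Fintype.card SignType = 3 from rfl]

section Antitone

variable {g : ℕ → ℝ≥0∞}

theorem AntitoneOn.tsum_comp_mul_le (hg : AntitoneOn g (Set.Ici 1)) {P : ℕ} (hP : 0 < P) :
    ∑' t : ℕ, g ((t + 1) * P) ≤ g P + (P : ℝ≥0∞)⁻¹ * ∑' m : ℕ, if P ≤ m then g (m + 1) else 0 := by
  have : NeZero P := ⟨hP.ne'⟩
  set F : ℕ → ℝ≥0∞ := fun m => if P ≤ m then g (m + 1) else 0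
  have tail : (P : ℝ≥0∞) * ∑' t : ℕ, g ((t + 2) * P) ≤ ∑' m, F m :=
    calc (P : ℝ≥0∞) * ∑' t : ℕ, g ((t + 2) * P) = ∑' (t : ℕ) (_ : Fin P), g ((t + 2) * P) := by
          simp [ENNReal.tsum_mul_left]
      _ ≤ ∑' (t : ℕ) (r : Fin P), F ((t + 1) * P + r) := by
          refine ENNReal.tsum_le_tsum fun t => ENNReal.tsum_le_tsum fun r => ?_
          have hr := r.isLt
          simp only [F, if_pos (show P ≤ (t + 1) * P + r by nlinarith)]
          exact hg (Set.mem_Ici.2 (by nlinarith)) (Set.mem_Ici.2 (by nlinarith)) (by nlinarith)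
      _ ≤ ∑' (t : ℕ) (r : Fin P), F (t * P + r) :=
          ENNReal.tsum_comp_le_tsum_of_injective (add_left_injective 1)
            (fun t => ∑' r : Fin P, F (t * P + r))
      _ = ∑' m, F m := by
          rw [← (Nat.divModEquiv P).symm.tsum_eq F, ENNReal.tsum_prod']
          simp
  rw [tsum_eq_zero_add' ENNReal.summable, zero_add, one_mul]
  gcongr
  rw [← ENNReal.div_eq_inv_mul, ENNReal.le_div_iff_mul_le (by simp [hP.ne']) (by simp), mul_comm]
  simpa [add_assoc, one_add_one_eq_two] using tail

theorem AntitoneOn.tsum_prod_add_one_succ_le (hg : AntitoneOn g (Set.Ici 1)) (k : ℕ) :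
    ∑' a : Fin (k + 1) → ℕ, g (∏ i, (a i + 1)) ≤
      ∑' a : Fin k → ℕ, g (∏ i, (a i + 1)) +
        ∑' m : ℕ, ENNReal.ofReal (harmonic m) ^ k * g (m + 1) :=
  calc ∑' a : Fin (k + 1) → ℕ, g (∏ i, (a i + 1))
      = ∑' (a : Fin k → ℕ) (t : ℕ), g ((t + 1) * ∏ i, (a i + 1)) := by
        rw [← (Fin.consEquiv fun _ => ℕ).tsum_eq, ENNReal.tsum_prod', ENNReal.tsum_comm]
        simp [Fin.prod_univ_succ]
    _ ≤ ∑' a : Fin k → ℕ, (g (∏ i, (a i + 1)) + ((∏ i, (a i + 1) : ℕ) : ℝ≥0∞)⁻¹ *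
          ∑' m : ℕ, if ∏ i, (a i + 1) ≤ m then g (m + 1) else 0) :=
        ENNReal.tsum_le_tsum fun a => hg.tsum_comp_mul_le (prod_pos fun i _ => Nat.succ_pos _)
    _ = ∑' a : Fin k → ℕ, g (∏ i, (a i + 1)) + ∑' m : ℕ, (∑' a : Fin k → ℕ,
          if ∏ i, (a i + 1) ≤ m then ((∏ i, (a i + 1) : ℕ) : ℝ≥0∞)⁻¹ else 0) * g (m + 1) := by
        rw [ENNReal.tsum_add]
        simp_rw [← ENNReal.tsum_mul_left, ← ENNReal.tsum_mul_right, ite_mul, mul_ite, zero_mul,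
          mul_zero]
        rw [ENNReal.tsum_comm]
    _ ≤ _ := by
        gcongr with m
        exact ENNReal.tsum_inv_prod_add_one_le_harmonic_pow k m

theorem AntitoneOn.tsum_prod_add_one_le (hg : AntitoneOn g (Set.Ici 1)) (n : ℕ) :
    ∑' a : Fin n → ℕ, g (∏ i, (a i + 1)) ≤
      (n + 1) * ∑' m : ℕ, (1 + ENNReal.ofReal (harmonic m)) ^ (n - 1) * g (m + 1) := by
  have hrec : ∀ n, ∑' a : Fin n → ℕ, g (∏ i, (a i + 1)) ≤
      g 1 + ∑ k ∈ range n, ∑' m : ℕ, ENNReal.ofReal (harmonic m) ^ k * g (m + 1) := by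
    intro n
    induction n with
    | zero => simp
    | succ k ih =>
      rw [sum_range_succ, ← add_assoc]
      exact (hg.tsum_prod_add_one_succ_le k).trans (by gcongr)
  set S := ∑' m : ℕ, (1 + ENNReal.ofReal (harmonic m)) ^ (n - 1) * g (m + 1)
  have hg1 : g 1 ≤ S := by
    simpa using ENNReal.le_tsum 0
      (f := fun m => (1 + ENNReal.ofReal (harmonic m)) ^ (n - 1) * g (m + 1))
  have hterm : ∀ k ∈ range n, ∑' m : ℕ, ENNReal.ofReal (harmonic m) ^ k * g (m + 1) ≤ S :=
    fun k hk => ENNReal.tsum_le_tsum fun m => by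
      gcongr ?_ * _
      calc ENNReal.ofReal (harmonic m) ^ k ≤ (1 + ENNReal.ofReal (harmonic m)) ^ k := by
            gcongr
            exact le_add_self
        _ ≤ _ := pow_le_pow_right₀ le_self_add (Nat.le_sub_one_of_lt (mem_range.1 hk))
  calc _ ≤ g 1 + ∑ k ∈ range n, ∑' m : ℕ, ENNReal.ofReal (harmonic m) ^ k * g (m + 1) := hrec n
    _ ≤ S + ∑ k ∈ range n, S := add_le_add hg1 (sum_le_sum hterm)
    _ = (n + 1) * S := by simp [add_mul, add_comm]

end Antitone

theorem summable_one_add_harmonic_pow_mul {f : ℕ → ℝ} (hf : ∀ m, 0 ≤ f m) (k : ℕ)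
    (hsum : Summable fun m : ℕ => Real.log (m + 1) ^ k * f m) :
    Summable fun m : ℕ => (1 + (harmonic m : ℝ)) ^ k * f m := by
  refine (hsum.mul_left (2 ^ k)).of_norm_bounded_eventually_nat ?_
  have hlog : ∀ᶠ m : ℕ in atTop, 2 ≤ Real.log (m + 1) :=
    (Real.tendsto_log_atTop.comp (tendsto_atTop_add_const_right _ 1
      tendsto_natCast_atTop_atTop)).eventually_ge_atTop 2
  filter_upwards [hlog, eventually_gt_atTop 0] with m hm hm0
  have hH : 1 + (harmonic m : ℝ) ≤ 2 * Real.log (m + 1) := by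
    have := harmonic_le_one_add_log m
    have : Real.log m ≤ Real.log (m + 1) := Real.log_le_log (by positivity) (by linarith)
    linarith
  have h0 : 0 ≤ 1 + (harmonic m : ℝ) := by
    have : (0 : ℝ) ≤ harmonic m := Rat.cast_nonneg.2 (harmonic_nonneg m)
    linarith
  rw [Real.norm_of_nonneg (mul_nonneg (pow_nonneg h0 k) (hf m))]
  calc (1 + (harmonic m : ℝ)) ^ k * f m ≤ (2 * Real.log (m + 1)) ^ k * f m :=
        mul_le_mul_of_nonneg_right (pow_le_pow_left₀ h0 hH k) (hf m)
    _ = 2 ^ k * (Real.log (m + 1) ^ k * f m) := by ring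

theorem tsum_one_add_harmonic_pow_mul_ofReal_ne_top {f : ℕ → ℝ} (hf : ∀ m, 0 ≤ f m) (k : ℕ)
    (hsum : Summable fun m : ℕ => Real.log (m + 1) ^ k * f m) :
    ∑' m : ℕ, (1 + ENNReal.ofReal (harmonic m)) ^ k * ENNReal.ofReal (f m) ≠ ∞ := by
  refine ne_of_eq_of_ne (tsum_congr fun m => ?_)
    (summable_one_add_harmonic_pow_mul hf k hsum).tsum_ofReal_ne_top
  have hH : (0 : ℝ) ≤ harmonic m := Rat.cast_nonneg.2 (harmonic_nonneg m)
  rw [ENNReal.ofReal_mul (by positivity), ENNReal.ofReal_pow (by positivity),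
    ENNReal.ofReal_add zero_le_one hH, ENNReal.ofReal_one]

theorem PiPlus_eq_natCast_prod {n : ℕ} (q : Fin n → ℤ) :
    PiPlus q = ((∏ i, ((q i).natAbs - 1 + 1) : ℕ) : ℝ) := by
  rw [PiPlus, Nat.cast_prod]
  refine prod_congr rfl fun i _ => ?_
  by_cases hq : q i = 0
  · simp [hq]
  · rw [if_neg hq, Nat.sub_add_cancel (Int.natAbs_pos.2 hq), Nat.cast_natAbs, Int.cast_abs]

theorem summable_multiplicative_general (n : ℕ) (ψ : ℝ → ℝ)
    (hpos : ∀ x > (0 : ℝ), 0 < ψ x) (hmono : AntitoneOn ψ (Set.Ioi 0))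
    (hsum : Summable (fun h : ℕ => (Real.log (h + 1)) ^ (n - 1) * ψ (h + 1))) :
    Summable (fun q : {q : Fin n → ℤ // q ≠ 0} => ψ (PiPlus q.1)) := by
  set g : ℕ → ℝ≥0∞ := fun m => ENNReal.ofReal (ψ m)
  have hg : AntitoneOn g (Set.Ici 1) := fun a ha b hb hab =>
    ENNReal.ofReal_le_ofReal <| hmono (Set.mem_Ioi.2 (Nat.cast_pos.2 ha))
      (Set.mem_Ioi.2 (Nat.cast_pos.2 hb)) (Nat.cast_le.2 hab)
  have hfin : ∑' q : Fin n → ℤ, g (∏ i, ((q i).natAbs - 1 + 1)) ≠ ∞ := by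
    refine ne_top_of_le_ne_top ?_ <| calc
      _ ≤ 3 ^ n * ∑' a : Fin n → ℕ, g (∏ i, (a i + 1)) :=
        ENNReal.tsum_comp_natAbs_sub_one_le n _
      _ ≤ 3 ^ n * ((n + 1) *
          ∑' m : ℕ, (1 + ENNReal.ofReal (harmonic m)) ^ (n - 1) * g (m + 1)) := by
        gcongr
        exact hg.tsum_prod_add_one_le n
    refine ENNReal.mul_ne_top (by simp) (ENNReal.mul_ne_top (by simp) ?_)
    simpa only [g, Nat.cast_succ] using tsum_one_add_harmonic_pow_mul_ofReal_ne_top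
      (fun m => (hpos _ (by positivity)).le) (n - 1) hsum
  refine ((ENNReal.summable_toReal hfin).subtype (· ≠ 0)).congr fun q => ?_
  rw [Function.comp_apply, ENNReal.toReal_ofReal, PiPlus_eq_natCast_prod]
  exact (hpos _ (by positivity)).le

/-- If `ψ` is non-increasing with `∑_h (log h)^{n-1} ψ(h) < ∞`, then
`∑_{q ∈ ℤⁿ, q ≠ 0} ψ(Π₊(q)) < ∞`. -/
theorem summable_multiplicative (n : ℕ) (hn : 0 < n) (ψ : ℝ → ℝ)
    (hpos : ∀ x > (0 : ℝ), 0 < ψ x) (hmono : AntitoneOn ψ (Set.Ioi 0))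
    (hsum : Summable (fun h : ℕ => (Real.log (h + 1)) ^ (n - 1) * ψ (h + 1))) :
    Summable (fun q : {q : Fin n → ℤ // q ≠ 0} => ψ (PiPlus q.1)) :=
  summable_multiplicative_general n ψ hpos hmono hsum
end
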